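/- Let α > 0 and g_α(x) = 4^x · x^{−(lg x)/4} · x^α. For all x > 0, the derivative of ln g_α(x) is at least ln 4 − 1/√x. -/

import Mathlib

noncomputable def g (a x : ℝ) : ℝ := 4 ^ x * x ^ (-(Real.logb 2 x) / 4) * x ^ a

theorem stmt_5 (a : ℝ) (ha : 0 < a) (x : ℝ) (hx : 0 < x) :
    Real.log 4 - 1 / Real.sqrt x ≤ deriv (fun y => Real.log (g a y)) x := by
  have hL2 : (0:ℝ) < Real.log 2 := Real.log_pos (by norm_num)
  set L2 := Real.log 2 with hL2def
  have heq : (fun y => Real.log (g a y)) =ᶠ[nhds x]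
      fun y => y * Real.log 4 - (Real.log y)^2 / (4 * L2) + a * Real.log y := by
    filter_upwards [eventually_gt_nhds hx] with y hy
    have h4 : (0:ℝ) < 4 ^ y := Real.rpow_pos_of_pos (by norm_num) y
    have hr : (0:ℝ) < y ^ (-(Real.logb 2 y) / 4) := Real.rpow_pos_of_pos hy _
    have hay : (0:ℝ) < y ^ a := Real.rpow_pos_of_pos hy a
    rw [g, Real.log_mul (by positivity) hay.ne', Real.log_mul h4.ne' hr.ne',
      Real.log_rpow (by norm_num : (0:ℝ) < 4), Real.log_rpow hy, Real.log_rpow hy,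
      Real.logb, ← hL2def]
    field_simp
    ring
  have hD : HasDerivAt
      (fun y => y * Real.log 4 - (Real.log y)^2 / (4 * L2) + a * Real.log y)
      (Real.log 4 - Real.log x / (2 * L2 * x) + a / x) x := by
    have h1 : HasDerivAt (fun y : ℝ => y * Real.log 4) (1 * Real.log 4) x :=
      (hasDerivAt_id x).mul_const _
    have hlog := Real.hasDerivAt_log hx.ne'
    have h2 := (hlog.pow 2).div_const (4 * L2)
    have h3 := hlog.const_mul a
    have : HasDerivAt (fun y => y * Real.log 4 - (Real.log y)^2 / (4 * L2) + a * Real.log y) _ x :=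
      (h1.sub h2).add h3
    convert this using 1
    field_simp
    ring
  rw [heq.deriv_eq, hD.deriv]
  set s := Real.sqrt x with hsdef
  have hs : 0 < s := Real.sqrt_pos.mpr hx
  have hsx : s * s = x := Real.mul_self_sqrt hx.le
  have hlogx : Real.log x = 2 * Real.log s := by
    rw [hsdef, Real.log_sqrt hx.le]; ring
  have he : (2:ℝ) ≤ Real.exp 1 := by
    have := Real.add_one_le_exp 1; linarith
  have hls : Real.log s ≤ s / 2 := by
    have h1 : Real.log s = Real.log (s / Real.exp 1) + 1 := by
      rw [Real.log_div hs.ne' (Real.exp_ne_zero 1), Real.log_exp]; ring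
    have h2 := Real.log_le_sub_one_of_pos (div_pos hs (Real.exp_pos 1))
    have h3 : s / Real.exp 1 ≤ s / 2 := by gcongr
    linarith
  have hL2half : (1:ℝ)/2 ≤ L2 := by
    have := Real.log_two_gt_d9; rw [hL2def]; linarith
  have hkey : Real.log x ≤ 2 * L2 * (s + a) := by nlinarith
  have h1s : 1 / s = s / x := by
    rw [eq_div_iff hx.ne']
    field_simp
    linarith
  have hfinal : Real.log x / (2 * L2 * x) ≤ 1 / s + a / x := by
    rw [h1s, ← add_div, ← div_div]
    gcongr
    rw [div_le_iff₀ (by positivity)]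
    nlinarith
  linarith
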